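/- arXiv:1506.04830 — 5 statements merged into one kernel-verified Lean document; each statement's English description precedes it below -/
import Mathlib

section
/- For every α > 2, the function h(β) = β^{2/α − 1}·(1+β)·ln(1+β) is strictly increasing on (0, ∞). -/
/-!
Since `1 · log 1 = 0`, the quotient `(1 + β) log (1 + β) / β` is the slope of the secant of the
strictly convex function `t ↦ t log t` between `1` and `1 + β`, so it is positive and strictly
increasing in `β > 0`. The function `h` is this quotient times `β ^ (2 / α)`, which is positive and
nondecreasing because `2 / α ≥ 0`.
-/

open Real Set

theorem strictMonoOn_one_add_mul_log_one_add_div :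
    StrictMonoOn (fun x : ℝ => (1 + x) * log (1 + x) / x) (Ioi 0) := by
  intro x (hx : 0 < x) y (hy : 0 < y) hxy
  have h := strictConvexOn_mul_log.secant_strict_mono (a := 1) (x := 1 + x) (y := 1 + y)
    (by norm_num) (by simp; linarith) (by simp; linarith) (by simp; linarith) (by simp; linarith)
    (by linarith)
  simpa using h

theorem strictMonoOn_rpow_mul_one_add_mul_log_one_add {c : ℝ} (hc : -1 ≤ c) :
    StrictMonoOn (fun x : ℝ => x ^ c * (1 + x) * log (1 + x)) (Ioi 0) := by
  have hfactor : ∀ x ∈ Ioi (0 : ℝ),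
      x ^ c * (1 + x) * log (1 + x) = x ^ (c + 1) * ((1 + x) * log (1 + x) / x) := by
    intro x (hx : 0 < x)
    rw [rpow_add_one hx.ne']
    field_simp
  intro x hx y hy hxy
  simp only [hfactor x hx, hfactor y hy]
  have hx : (0 : ℝ) < x := hx
  exact mul_lt_mul_of_le_of_lt_of_nonneg_of_pos
    (rpow_le_rpow hx.le hxy.le (by linarith))
    (strictMonoOn_one_add_mul_log_one_add_div hx hy hxy)
    (div_pos (mul_pos (by linarith) (log_pos (by linarith))) hx).le
    (rpow_pos_of_pos (hx.trans hxy) _)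

/-- For every α > 2, the function
h(β) = β^{2/α − 1}·(1+β)·ln(1+β) is strictly increasing on (0, ∞). -/
theorem h_strictMono
    (α : ℝ) (hα : 2 < α) :
    StrictMonoOn (fun β : ℝ => β ^ (2 / α - 1) * (1 + β) * Real.log (1 + β))
      (Set.Ioi 0) :=
  strictMonoOn_rpow_mul_one_add_mul_log_one_add <| by
    have : 0 < 2 / α := by positivity
    linarith
end

section
/- For every α > 2 and every k > 0, the transcendental equation α·β = k·β^{2/α}·(1+β)·ln(1+β) has exactly one solution β > 0. -/
/-!
Dividing by `k β`, the equation reads `g β = α / k` with `g x = x ^ (c - 1) (1 + x) log (1 + x)`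
and `c = 2 / α > 0`. Since `g' x = x ^ (c - 2) (c (1 + x) log (1 + x) + x - log (1 + x))` and
`log (1 + x) < x`, `g` is strictly increasing on `(0, ∞)`; as `0 ≤ g x ≤ x ^ c (1 + x)` near `0`
and `g x ≥ log (1 + x)` for `x ≥ 1`, it maps `(0, ∞)` onto `(0, ∞)`.
-/

open Real Set Filter Topology

theorem surjOn_Ioi_of_tendsto_nhdsGT_of_tendsto_atTop {f : ℝ → ℝ} {a l : ℝ}
    (hf : ContinuousOn f (Ioi a)) (hleft : Tendsto f (𝓝[>] a) (𝓝 l))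
    (htop : Tendsto f atTop atTop) : SurjOn f (Ioi a) (Ioi l) := by
  intro y hy
  obtain ⟨x₁, hx₁y, hx₁⟩ := ((hleft.eventually (gt_mem_nhds hy)).and self_mem_nhdsWithin).exists
  obtain ⟨x₂, hx₂y, hx₂⟩ := ((htop.eventually (eventually_ge_atTop y)).and
    (eventually_gt_atTop a)).exists
  exact hf.surjOn_Icc hx₁ hx₂ ⟨hx₁y.le, hx₂y⟩

noncomputable def rpowLogOnePlus (c x : ℝ) : ℝ := x ^ (c - 1) * ((1 + x) * log (1 + x))

section rpowLogOnePlus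

variable {c x : ℝ}

theorem rpowLogOnePlus_eq (hx : 0 < x) :
    rpowLogOnePlus c x = x ^ c * (1 + x) * log (1 + x) / x := by
  rw [rpowLogOnePlus, rpow_sub_one hx.ne']
  ring

theorem hasDerivAt_rpowLogOnePlus (hx : 0 < x) :
    HasDerivAt (rpowLogOnePlus c)
      (x ^ (c - 2) * (c * (1 + x) * log (1 + x) + (x - log (1 + x)))) x := by
  have hx1 : 1 + x ≠ 0 := by positivity
  have hpow : HasDerivAt (fun x : ℝ => x ^ (c - 1)) ((c - 1) * x ^ (c - 1 - 1)) x :=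
    hasDerivAt_rpow_const (Or.inl hx.ne')
  have hlog : HasDerivAt (fun x : ℝ => (1 + x) * log (1 + x))
      (1 * log (1 + x) + (1 + x) * (1 / (1 + x))) x := by
    have h1x := (hasDerivAt_id' x).const_add 1
    exact h1x.mul (h1x.log hx1)
  refine (hpow.mul hlog).congr_deriv ?_
  rw [show c - 1 - 1 = c - 2 by ring, show c - 1 = (c - 2) + 1 by ring, rpow_add_one hx.ne']
  field_simp
  ring

theorem continuousOn_rpowLogOnePlus : ContinuousOn (rpowLogOnePlus c) (Ioi 0) :=
  fun _ hx => (hasDerivAt_rpowLogOnePlus hx).continuousAt.continuousWithinAt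

theorem strictMonoOn_rpowLogOnePlus (hc : 0 ≤ c) : StrictMonoOn (rpowLogOnePlus c) (Ioi 0) := by
  refine strictMonoOn_of_deriv_pos (convex_Ioi 0) continuousOn_rpowLogOnePlus fun x hx => ?_
  rw [interior_Ioi] at hx
  have hx : 0 < x := hx
  rw [(hasDerivAt_rpowLogOnePlus hx).deriv]
  have hlog_lt : log (1 + x) < x := by
    linarith [log_lt_sub_one_of_pos (by linarith : (0 : ℝ) < 1 + x) (by simpa using hx.ne')]
  have hlog_pos : 0 < log (1 + x) := log_pos (by linarith)
  have hlead : 0 ≤ c * (1 + x) * log (1 + x) := by positivity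
  exact mul_pos (rpow_pos_of_pos hx _) (by linarith)

theorem tendsto_rpowLogOnePlus_nhdsGT_zero (hc : 0 < c) :
    Tendsto (rpowLogOnePlus c) (𝓝[>] 0) (𝓝 0) := by
  have hbound : Tendsto (fun x : ℝ => x ^ c * (1 + x)) (𝓝[>] 0) (𝓝 0) := by
    have : ContinuousAt (fun x : ℝ => x ^ c * (1 + x)) 0 :=
      (continuousAt_rpow_const 0 c (Or.inr hc.le)).mul (continuousAt_const.add continuousAt_id)
    simpa [zero_rpow hc.ne'] using this.tendsto.mono_left nhdsWithin_le_nhds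
  refine tendsto_of_tendsto_of_tendsto_of_le_of_le' tendsto_const_nhds hbound ?_ ?_ <;>
    filter_upwards [self_mem_nhdsWithin] with x (hx : 0 < x)
  · rw [rpowLogOnePlus]
    exact mul_nonneg (by positivity) (mul_nonneg (by linarith) (log_nonneg (by linarith)))
  · rw [rpowLogOnePlus_eq hx, div_le_iff₀ hx]
    gcongr
    linarith [log_le_sub_one_of_pos (by linarith : (0 : ℝ) < 1 + x)]

theorem tendsto_rpowLogOnePlus_atTop (hc : 0 ≤ c) : Tendsto (rpowLogOnePlus c) atTop atTop := by
  refine tendsto_atTop_mono' atTop ?_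
    (tendsto_log_atTop.comp (tendsto_atTop_add_const_left atTop 1 tendsto_id))
  filter_upwards [eventually_ge_atTop 1] with x hx
  have hx0 : 0 < x := by linarith
  have hlog : 0 ≤ log (1 + x) := log_nonneg (by linarith)
  have hxc : 1 ≤ x ^ c := one_le_rpow hx hc
  rw [Function.comp_apply, id, rpowLogOnePlus_eq hx0, le_div_iff₀ hx0]
  calc log (1 + x) * x ≤ x ^ c * x * log (1 + x) := by
        nlinarith [mul_nonneg (mul_nonneg (sub_nonneg.2 hxc) hx0.le) hlog]
    _ ≤ x ^ c * (1 + x) * log (1 + x) := by gcongr; linarith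

theorem surjOn_rpowLogOnePlus (hc : 0 < c) : SurjOn (rpowLogOnePlus c) (Ioi 0) (Ioi 0) :=
  surjOn_Ioi_of_tendsto_nhdsGT_of_tendsto_atTop continuousOn_rpowLogOnePlus
    (tendsto_rpowLogOnePlus_nhdsGT_zero hc) (tendsto_rpowLogOnePlus_atTop hc.le)

theorem mul_eq_rpow_mul_log_iff {α k β : ℝ} (hk : k ≠ 0) (hβ : 0 < β) :
    α * β = k * β ^ c * (1 + β) * log (1 + β) ↔ rpowLogOnePlus c β = α / k := by
  rw [rpowLogOnePlus_eq hβ, div_eq_div_iff hβ.ne' hk]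
  constructor <;> intro h <;> linarith

end rpowLogOnePlus

/-- For every α > 2 and every k > 0, the transcendental equation
α·β = k·β^{2/α}·(1+β)·ln(1+β) has exactly one solution β > 0. -/
theorem transcendental_eq_unique_solution
    (α k : ℝ) (hα : 2 < α) (hk : 0 < k) :
    ∃! β : ℝ, 0 < β ∧ α * β = k * β ^ (2 / α) * (1 + β) * Real.log (1 + β) := by
  have hc : 0 < 2 / α := div_pos two_pos (by linarith)
  obtain ⟨β, hβ, hβeq⟩ := surjOn_rpowLogOnePlus hc (show 0 < α / k by positivity)
  refine ⟨β, ⟨hβ, (mul_eq_rpow_mul_log_iff hk.ne' hβ).2 hβeq⟩, ?_⟩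
  rintro γ ⟨hγ, hγeq⟩
  exact (strictMonoOn_rpowLogOnePlus hc.le).injOn hγ hβ
    (((mul_eq_rpow_mul_log_iff hk.ne' hγ).1 hγeq).trans hβeq.symm)
end

section
/- Fix W_s > 0 and set c = λ·κ·π·d²·(W_p/W_s)^{2/α}, and let β_un > 0 be the unique solution of α·β = 2c·β^{2/α}·(1+β)·ln(1+β). Then the function β ↦ T(W_s, β) = log₂(1+β)·exp(−c·β^{2/α}) is strictly increasing on (0, β_un] and strictly decreasing on [β_un, ∞). -/
/-!
Write `p = 2/α`. On `(0, ∞)` the derivative of the throughput is a positive multiple of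
`1 - K β`, where `K β = c p β^p · (1+β) ln(1+β) / β`. The defining equation of `β_un` says
exactly `K β_un = 1`, and `K` is strictly increasing: `β^p` is, and `(1+β) ln(1+β) / β` is the
secant slope at `t = 1` of the strictly convex function `t ln t` (which vanishes at `1`). So the
derivative is positive before `β_un` and negative after it.
-/

open Real Set

noncomputable section

namespace Throughput

def throughput (c p β : ℝ) : ℝ := logb 2 (1 + β) * exp (-(c * β ^ p))

def criticalRatio (c p β : ℝ) : ℝ := c * p * β ^ p * ((1 + β) * log (1 + β) / β)

lemma strictMonoOn_one_add_mul_log_one_add_div :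
    StrictMonoOn (fun x : ℝ => (1 + x) * log (1 + x) / x) (Ioi 0) := by
  intro x hx y hy hxy
  have h := strictConvexOn_mul_log.secant_strict_mono_aux2 (x := 1) (y := 1 + x) (z := 1 + y)
    (by simp) (by simp; linarith [mem_Ioi.1 hy]) (by linarith [mem_Ioi.1 hx]) (by linarith)
  simpa using h

lemma strictMonoOn_criticalRatio {c p : ℝ} (hc : 0 < c) (hp : 0 < p) :
    StrictMonoOn (criticalRatio c p) (Ioi 0) := by
  intro x hx y hy hxy
  have hx0 : (0 : ℝ) < x := hx
  have hpow : x ^ p < y ^ p := rpow_lt_rpow hx0.le hxy hp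
  have hslope := strictMonoOn_one_add_mul_log_one_add_div hx hy hxy
  have hslope_pos : 0 < (1 + x) * log (1 + x) / x :=
    div_pos (mul_pos (by linarith) (log_pos (by linarith))) hx0
  unfold criticalRatio
  rw [mul_assoc (c * p), mul_assoc (c * p)]
  exact mul_lt_mul_of_pos_left
    (mul_lt_mul'' hpow hslope (rpow_nonneg hx0.le p) hslope_pos.le) (mul_pos hc hp)

lemma hasDerivAt_throughput (c p : ℝ) {x : ℝ} (hx : 0 < x) :
    HasDerivAt (throughput c p)
      (exp (-(c * x ^ p)) / ((1 + x) * log 2) * (1 - criticalRatio c p x)) x := by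
  have h1x : 0 < 1 + x := by linarith
  have hlogb : HasDerivAt (fun y : ℝ => logb 2 (1 + y)) (1 / (1 + x) / log 2) x := by
    simpa [Function.comp_def, logb] using
      ((hasDerivAt_log h1x.ne').comp x ((hasDerivAt_id x).const_add 1)).div_const (log 2)
  have hexp : HasDerivAt (fun y : ℝ => exp (-(c * y ^ p)))
      (exp (-(c * x ^ p)) * (-(c * (p * x ^ (p - 1))))) x :=
    ((hasDerivAt_rpow_const (Or.inl hx.ne')).const_mul c).neg.exp
  refine (hlogb.mul hexp).congr_deriv ?_
  rw [criticalRatio, rpow_sub hx, rpow_one, logb]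
  field_simp
  ring

theorem strictMonoOn_Ioc_and_strictAntiOn_Ici_throughput {c p b : ℝ} (hc : 0 < c) (hp : 0 < p)
    (hb : 0 < b) (hcrit : criticalRatio c p b = 1) :
    StrictMonoOn (throughput c p) (Ioc 0 b) ∧ StrictAntiOn (throughput c p) (Ici b) := by
  have hcont : ContinuousOn (throughput c p) (Ioi 0) := fun x hx =>
    (hasDerivAt_throughput c p hx).continuousAt.continuousWithinAt
  have hderiv_pos_factor : ∀ x : ℝ, 0 < x → 0 < exp (-(c * x ^ p)) / ((1 + x) * log 2) :=
    fun x hx => div_pos (exp_pos _) (mul_pos (by linarith) (log_pos one_lt_two))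
  constructor
  · refine strictMonoOn_of_deriv_pos (convex_Ioc 0 b) (hcont.mono Ioc_subset_Ioi_self) ?_
    intro x hx
    rw [interior_Ioc] at hx
    have hK : criticalRatio c p x < 1 :=
      hcrit ▸ strictMonoOn_criticalRatio hc hp hx.1 (mem_Ioi.2 hb) hx.2
    rw [(hasDerivAt_throughput c p hx.1).deriv]
    exact mul_pos (hderiv_pos_factor x hx.1) (by linarith)
  · refine strictAntiOn_of_deriv_neg (convex_Ici b) (hcont.mono (Ici_subset_Ioi.2 hb)) ?_
    intro x hx
    rw [interior_Ici] at hx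
    have hx0 : 0 < x := hb.trans hx
    have hK : 1 < criticalRatio c p x :=
      hcrit ▸ strictMonoOn_criticalRatio hc hp (mem_Ioi.2 hb) (mem_Ioi.2 hx0) hx
    rw [(hasDerivAt_throughput c p hx0).deriv]
    exact mul_neg_of_pos_of_neg (hderiv_pos_factor x hx0) (by linarith)

end Throughput

end

open Throughput in
theorem throughput_mono_anti_around_critical_point_general
    (α c βun : ℝ)
    (hα : 2 < α)
    (hβun : 0 < βun)
    (heq : α * βun = 2 * c * βun ^ (2 / α) * (1 + βun) * Real.log (1 + βun)) :
    StrictMonoOn (fun β : ℝ => Real.logb 2 (1 + β) * Real.exp (-(c * β ^ (2 / α))))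
      (Set.Ioc 0 βun) ∧
    StrictAntiOn (fun β : ℝ => Real.logb 2 (1 + β) * Real.exp (-(c * β ^ (2 / α))))
      (Set.Ici βun) := by
  have hα0 : 0 < α := by linarith
  have hweight : 0 < βun ^ (2 / α) * (1 + βun) * Real.log (1 + βun) :=
    mul_pos (mul_pos (Real.rpow_pos_of_pos hβun _) (by linarith))
      (Real.log_pos (by linarith))
  have hc : 0 < c := by
    have : 0 < 2 * c * (βun ^ (2 / α) * (1 + βun) * Real.log (1 + βun)) := by
      nlinarith [mul_pos hα0 hβun]
    nlinarith
  have hcrit : criticalRatio c (2 / α) βun = 1 := by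
    rw [criticalRatio]
    field_simp
    linarith
  exact strictMonoOn_Ioc_and_strictAntiOn_Ici_throughput hc (div_pos two_pos hα0) hβun hcrit

/-- Fix W_s > 0, set c = λ·κ·π·d²·(W_p/W_s)^{2/α}, and let β_un > 0 be the
unique solution of α·β = 2c·β^{2/α}·(1+β)·ln(1+β). Then β ↦ T(W_s, β) = log₂(1+β)·exp(−c·β^{2/α})
is strictly increasing on (0, β_un] and strictly decreasing on [β_un, ∞). -/
theorem throughput_mono_anti_around_critical_point
    (α lam κ d Wp Ws c βun : ℝ)
    (hα : 2 < α) (hlam : 0 < lam) (hd : 0 < d) (hWp : 0 < Wp) (hWs : 0 < Ws)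
    (hκ : κ = Real.Gamma (1 + 2 / α) * Real.Gamma (1 - 2 / α))
    (hc : c = lam * κ * Real.pi * d ^ 2 * (Wp / Ws) ^ (2 / α))
    (hβun : 0 < βun)
    (heq : α * βun = 2 * c * βun ^ (2 / α) * (1 + βun) * Real.log (1 + βun)) :
    StrictMonoOn (fun β : ℝ => Real.logb 2 (1 + β) * Real.exp (-(c * β ^ (2 / α))))
      (Set.Ioc 0 βun) ∧
    StrictAntiOn (fun β : ℝ => Real.logb 2 (1 + β) * Real.exp (-(c * β ^ (2 / α))))
      (Set.Ici βun) :=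
  throughput_mono_anti_around_critical_point_general α c βun hα hβun heq
end

section
/- Fix W_s > 0 and set k = 2·λ·κ·π·d²·(W_p/W_s)^{2/α}. If β > 0 satisfies the critical-point equation α·β = k·β^{2/α}·(1+β)·ln(1+β), then the success probability at β equals P_suc(W_s, β) = exp(−α·β / (2·(1+β)·ln(1+β))); equivalently, the outage probability at β equals 1 − exp(−α·β / (2·(1+β)·ln(1+β))). -/
open Real

lemma eq_div_of_mul_eq_two_mul_one_add_mul_log {a β s : ℝ} (hβ : 0 < β)
    (h : a = 2 * s * (1 + β) * log (1 + β)) :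
    s = a / (2 * (1 + β) * log (1 + β)) := by
  have hlog : log (1 + β) ≠ 0 := (log_pos (by linarith)).ne'
  rw [h]
  field_simp

theorem success_prob_at_critical_point_general
    (α lam κ d Wp Ws k β : ℝ)
    (hβ : 0 < β)
    (hk : k = 2 * (lam * κ * Real.pi * d ^ 2 * (Wp / Ws) ^ (2 / α)))
    (heq : α * β = k * β ^ (2 / α) * (1 + β) * Real.log (1 + β)) :
    Real.exp (-(lam * κ * Real.pi * d ^ 2 * β ^ (2 / α) * (Wp / Ws) ^ (2 / α))) =
      Real.exp (-(α * β / (2 * (1 + β) * Real.log (1 + β)))) ∧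
    1 - Real.exp (-(lam * κ * Real.pi * d ^ 2 * β ^ (2 / α) * (Wp / Ws) ^ (2 / α))) =
      1 - Real.exp (-(α * β / (2 * (1 + β) * Real.log (1 + β)))) := by
  have exponent_eq := eq_div_of_mul_eq_two_mul_one_add_mul_log (a := α * β)
    (s := lam * κ * Real.pi * d ^ 2 * β ^ (2 / α) * (Wp / Ws) ^ (2 / α)) hβ
    (by rw [heq, hk]; ring)
  rw [exponent_eq]
  exact ⟨rfl, rfl⟩

/-- Fix W_s > 0 and set k = 2·λ·κ·π·d²·(W_p/W_s)^{2/α}. If β > 0 satisfies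
the critical-point equation α·β = k·β^{2/α}·(1+β)·ln(1+β), then the success probability at β
equals exp(−α·β / (2·(1+β)·ln(1+β))); equivalently, the outage probability at β equals
1 − exp(−α·β / (2·(1+β)·ln(1+β))). -/
theorem success_prob_at_critical_point
    (α lam κ d Wp Ws k β : ℝ)
    (hα : 2 < α) (hlam : 0 < lam) (hd : 0 < d) (hWp : 0 < Wp) (hWs : 0 < Ws) (hβ : 0 < β)
    (hκ : κ = Real.Gamma (1 + 2 / α) * Real.Gamma (1 - 2 / α))
    (hk : k = 2 * (lam * κ * Real.pi * d ^ 2 * (Wp / Ws) ^ (2 / α)))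
    (heq : α * β = k * β ^ (2 / α) * (1 + β) * Real.log (1 + β)) :
    Real.exp (-(lam * κ * Real.pi * d ^ 2 * β ^ (2 / α) * (Wp / Ws) ^ (2 / α))) =
      Real.exp (-(α * β / (2 * (1 + β) * Real.log (1 + β)))) ∧
    1 - Real.exp (-(lam * κ * Real.pi * d ^ 2 * β ^ (2 / α) * (Wp / Ws) ^ (2 / α))) =
      1 - Real.exp (-(α * β / (2 * (1 + β) * Real.log (1 + β)))) :=
  success_prob_at_critical_point_general α lam κ d Wp Ws k β hβ hk heq
end

section
/- Fix W_s > 0, set k = 2·λ·κ·π·d²·(W_p/W_s)^{2/α}, let β_un > 0 be the unique solution of α·β = k·β^{2/α}·(1+β)·ln(1+β), and let ε ∈ (0, 1). If 1 − exp(−α·β_un / (2·(1+β_un)·ln(1+β_un))) > ε, then every β > 0 satisfying the outage constraint 1 − P_suc(W_s, β) ≤ ε satisfies β < β_un. -/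
/-!
The defining equation of `β_un` rewrites the exponent `α β_un / (2 (1 + β_un) ln (1 + β_un))`
as `λ κ π d² β_un^{2/α} (W_p/W_s)^{2/α}`, so the hypothesis says that the outage probability at
`β_un` exceeds `ε`. The outage probability is strictly increasing in `β`, hence any `β` meeting
the constraint lies below `β_un`.
-/

open Real

theorem Gamma_one_add_mul_Gamma_one_sub_pos {s : ℝ} (hs₀ : -1 < s) (hs₁ : s < 1) :
    0 < Gamma (1 + s) * Gamma (1 - s) :=
  mul_pos (Gamma_pos_of_pos (by linarith)) (Gamma_pos_of_pos (by linarith))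

/-- `1 - P_suc`, with all parameters other than the SIR threshold `β` collected in `C`. -/
noncomputable def outage (C p β : ℝ) : ℝ := 1 - exp (-(C * β ^ p))

theorem outage_strictMonoOn {C p : ℝ} (hC : 0 < C) (hp : 0 < p) :
    StrictMonoOn (outage C p) (Set.Ici 0) := by
  intro x hx y _ hxy
  unfold outage
  gcongr

theorem constrained_beta_lt_unconstrained_general
    (α lam κ d Wp Ws k βun ε : ℝ)
    (hα : 2 < α) (hlam : 0 < lam) (hd : 0 < d) (hWp : 0 < Wp) (hWs : 0 < Ws)
    (hκ : κ = Real.Gamma (1 + 2 / α) * Real.Gamma (1 - 2 / α))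
    (hk : k = 2 * (lam * κ * Real.pi * d ^ 2 * (Wp / Ws) ^ (2 / α)))
    (hβun : 0 < βun)
    (heq : α * βun = k * βun ^ (2 / α) * (1 + βun) * Real.log (1 + βun))
    (hout : 1 - Real.exp (-(α * βun / (2 * (1 + βun) * Real.log (1 + βun)))) > ε) :
    ∀ β : ℝ, 0 < β →
      1 - Real.exp (-(lam * κ * Real.pi * d ^ 2 * β ^ (2 / α) * (Wp / Ws) ^ (2 / α))) ≤ ε →
      β < βun := by
  intro β hβ hβout
  set C := lam * κ * π * d ^ 2 * (Wp / Ws) ^ (2 / α)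
  have hα₀ : 0 < α := by linarith
  have hp : 0 < 2 / α := by positivity
  have hκ₀ : 0 < κ :=
    hκ ▸ Gamma_one_add_mul_Gamma_one_sub_pos (by linarith) ((div_lt_one hα₀).2 hα)
  have hC : 0 < C := by positivity
  have hlog : 0 < log (1 + βun) := log_pos (by linarith)
  have hexponent : α * βun / (2 * (1 + βun) * log (1 + βun)) = C * βun ^ (2 / α) := by
    rw [heq, hk]
    field_simp
  have hβ_outage : outage C (2 / α) β ≤ ε := by
    rw [outage]
    convert hβout using 4
    ring
  have hβun_outage : ε < outage C (2 / α) βun := by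
    rwa [outage, ← hexponent]
  exact ((outage_strictMonoOn hC hp).lt_iff_lt hβ.le hβun.le).1 (hβ_outage.trans_lt hβun_outage)

/-- Fix W_s > 0, set k = 2·λ·κ·π·d²·(W_p/W_s)^{2/α}, let β_un > 0 be the
unique solution of α·β = k·β^{2/α}·(1+β)·ln(1+β), and let ε ∈ (0, 1). If
1 − exp(−α·β_un / (2·(1+β_un)·ln(1+β_un))) > ε, then every β > 0 satisfying the outage
constraint 1 − P_suc(W_s, β) ≤ ε satisfies β < β_un. -/
theorem constrained_beta_lt_unconstrained
    (α lam κ d Wp Ws k βun ε : ℝ)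
    (hα : 2 < α) (hlam : 0 < lam) (hd : 0 < d) (hWp : 0 < Wp) (hWs : 0 < Ws)
    (hκ : κ = Real.Gamma (1 + 2 / α) * Real.Gamma (1 - 2 / α))
    (hk : k = 2 * (lam * κ * Real.pi * d ^ 2 * (Wp / Ws) ^ (2 / α)))
    (hβun : 0 < βun)
    (heq : α * βun = k * βun ^ (2 / α) * (1 + βun) * Real.log (1 + βun))
    (hε : ε ∈ Set.Ioo (0 : ℝ) 1)
    (hout : 1 - Real.exp (-(α * βun / (2 * (1 + βun) * Real.log (1 + βun)))) > ε) :
    ∀ β : ℝ, 0 < β →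
      1 - Real.exp (-(lam * κ * Real.pi * d ^ 2 * β ^ (2 / α) * (Wp / Ws) ^ (2 / α))) ≤ ε →
      β < βun :=
  constrained_beta_lt_unconstrained_general α lam κ d Wp Ws k βun ε hα hlam hd hWp hWs hκ hk hβun
    heq hout
end
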